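/- Let M be a monotone Möbius structure on S¹ and let b, b' be two pairs of distinct points of S¹ in the strong causal relation. Then there exists a common perpendicular: a pair a=(x,y) such that both (a,b) and (a,b') are harmonic. -/

import Mathlib

open scoped Classical

section Mobius

variable {X : Type*}

/-- The pairs `(x,y)` and `(z,u)` separate each other on the circularly ordered set `X`:
`z` and `u` lie on different open arcs determined by `x` and `y`. -/
def PairSeparates [CircularOrder X] (x y z u : X) : Prop :=
  (sbtw x z y ∧ sbtw y u x) ∨ (sbtw x u y ∧ sbtw y z x)

/-- The pair `(d₁,d₂)` separates the pairs `(b₁,b₂)` and `(c₁,c₂)`: the latter two pairs lie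
on different open arcs determined by `(d₁,d₂)`. -/
def ArcSepPairs [CircularOrder X] (d₁ d₂ b₁ b₂ c₁ c₂ : X) : Prop :=
  (sbtw d₁ b₁ d₂ ∧ sbtw d₁ b₂ d₂ ∧ sbtw d₂ c₁ d₁ ∧ sbtw d₂ c₂ d₁) ∨
  (sbtw d₁ c₁ d₂ ∧ sbtw d₁ c₂ d₂ ∧ sbtw d₂ b₁ d₁ ∧ sbtw d₂ b₂ d₁)

/-- Two pairs `(b₁,b₂)` and `(c₁,c₂)` of points are in the strong causal relation:
either of them lies entirely in one open arc determined by the other. -/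
def StrongCausal [CircularOrder X] (b₁ b₂ c₁ c₂ : X) : Prop :=
  (sbtw b₁ c₁ b₂ ∧ sbtw b₁ c₂ b₂) ∨ (sbtw b₂ c₁ b₁ ∧ sbtw b₂ c₂ b₁) ∨
  (sbtw c₁ b₁ c₂ ∧ sbtw c₁ b₂ c₂) ∨ (sbtw c₂ b₁ c₁ ∧ sbtw c₂ b₂ c₁)

/-- The topology generated by open balls of the semi-metrics with infinitely remote points,
centered at finite points. `D ω x y` denotes `|xy|` in the semi-metric with infinitely remote
point `ω`. -/
def MTopology (D : X → X → X → ℝ) : TopologicalSpace X :=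
  TopologicalSpace.generateFrom
    {s | ∃ ω x r, x ≠ ω ∧ s = {y | y ≠ ω ∧ D ω x y < r}}

/-- A (ptolemaic) monotone Möbius structure on a circle `X`, presented by the family of its
semi-metrics with infinitely remote points: `D ω x y` is the distance `|xy|_ω` in the
semi-metric with infinitely remote point `ω` (defined for `x, y ≠ ω`).  The semi-metrics
are pairwise related by metric inversion (up to homothety), every one of them satisfies the
Ptolemy inequality, the monotonicity axiom (M) holds, the M-topology is the given topology
of `X`, and `X` is homeomorphic to the circle. -/
structure MonotoneMobius (X : Type*) [CircularOrder X] [t : TopologicalSpace X] where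
  D : X → X → X → ℝ
  symm : ∀ ω x y, D ω x y = D ω y x
  refl : ∀ ω x, D ω x x = 0
  pos : ∀ ω x y, x ≠ y → x ≠ ω → y ≠ ω → 0 < D ω x y
  inversion : ∀ ω ω', ω ≠ ω' → ∃ c : ℝ, 0 < c ∧ ∀ x y, x ≠ ω → y ≠ ω → x ≠ ω' → y ≠ ω' →
    D ω' x y = c * D ω x y / (D ω x ω' * D ω y ω')
  ptolemy : ∀ ω x y z u, x ≠ ω → y ≠ ω → z ≠ ω → u ≠ ω →
    D ω x y * D ω z u ≤ D ω x z * D ω y u + D ω x u * D ω y z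
  mono : ∀ ω x y z u, x ≠ ω → y ≠ ω → z ≠ ω → u ≠ ω → PairSeparates x y z u →
    D ω x z * D ω y u < D ω x y * D ω z u ∧ D ω x u * D ω y z < D ω x y * D ω z u
  mtop : MTopology D = t
  circle : Nonempty (X ≃ₜ AddCircle (1 : ℝ))

variable [CircularOrder X] [TopologicalSpace X]

/-- The 4-tuple `(x,y,z,u)` is harmonic (of the first type): `|xz||yu| = |xu||yz|` in any
semi-metric of the Möbius structure. -/
def MonotoneMobius.Harmonic (M : MonotoneMobius X) (x y z u : X) : Prop :=
  ∀ ω, ω ≠ x → ω ≠ y → ω ≠ z → ω ≠ u →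
    M.D ω x z * M.D ω y u = M.D ω x u * M.D ω y z

/-- The distance `|q q'| = |ln ((|xp'||yp|)/(|xp||yp'|))|` between two harmonic pairs
`q = ((x,y),(p,·))` and `q' = ((x,y),(p',·))` with common axis `(x,y)`; computed here in the
semi-metric with infinitely remote point `x`, where it equals `|ln (|yp|_x / |yp'|_x)|`. -/
noncomputable def MonotoneMobius.lineDist (M : MonotoneMobius X) (x y p p' : X) : ℝ :=
  |Real.log (M.D x y p / M.D x y p')|

end Mobius

/-!
After renaming, `z'` and `u'` lie on the arc `(z, u)` in this order. Put the infinitely remote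
point `ω` between `z` and `z'`, so that it avoids the closed arcs `A = [z', u']` and `B = [u, z]`;
in `|·|_ω`, harmonicity of `((x, y), (z, u))` is the vanishing of `|xz||yu| - |xu||yz|`. For
`x ∈ A` this defect changes sign between `y = u` and `y = z`, and the monotonicity axiom makes it
injective in `y ∈ B`; so it has a unique zero `y = ρ x ∈ B`, the reflection of `x` in `(z, u)`,
and `ρ` is continuous on `A` by compactness of `B`. The defect of `((x, ρ x), (z', u'))` changes
sign between `x = z'` and `x = u'`, and the intermediate value theorem on the connected arc `A`
yields the common perpendicular.
-/

open Set Filter Topology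

section CircularOrder

variable {X : Type*} [CircularOrder X] {a b c d m p : X}

theorem SBtw.sbtw.left_ne (h : sbtw a b c) : a ≠ b := by
  rintro rfl; exact sbtw_irrefl_left h

theorem SBtw.sbtw.ne_right (h : sbtw a b c) : b ≠ c := by
  rintro rfl; exact sbtw_irrefl_right h

theorem SBtw.sbtw.left_ne_right (h : sbtw a b c) : a ≠ c := by
  rintro rfl; exact sbtw_irrefl_left_right h

theorem Btw.btw.sbtw_of_ne (h : btw a b c) (hab : a ≠ b) (hbc : b ≠ c) (hac : a ≠ c) :
    sbtw a b c := by
  refine h.sbtw_of_not_btw fun h' => ?_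
  rcases h.antisymm h' with h | h | h
  exacts [hab h, hbc h, hac h.symm]

theorem sbtw_drop_left (h₁ : sbtw a b c) (h₂ : sbtw a c d) : sbtw b c d :=
  sbtw_cyclic_right (sbtw_trans_right (sbtw_cyclic_left h₂) (sbtw_cyclic_right h₁))

theorem eq_of_btw_of_btw_of_sbtw (h : sbtw a b c) (h₁ : btw a p b) (h₂ : btw b p c) : p = b := by
  by_contra hpb
  have hpa : p ≠ a := by rintro rfl; exact h.cyclic_left.not_btw h₂.cyclic_left
  have hpc : p ≠ c := by rintro rfl; exact h.not_btw h₁.cyclic_left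
  have hbpa : sbtw b p a :=
    sbtw_trans_right (h₂.sbtw_of_ne (Ne.symm hpb) hpc h.ne_right) h.cyclic_left
  exact sbtw_asymm hbpa (h₁.sbtw_of_ne (Ne.symm hpa) hpb h.left_ne)

theorem btw_or_btw_of_not_btw (hm : sbtw b m a) (hp : ¬btw a p b) : btw b p m ∨ btw m p a := by
  refine (btw_total b p m).imp_right fun h => ?_
  rcases eq_or_ne m p with rfl | hmp
  · exact btw_rfl_left
  have hbp : b ≠ p := by rintro rfl; exact hp btw_rfl_right
  exact (sbtw_drop_left (h.cyclic_left.cyclic_left.sbtw_of_ne hm.left_ne hmp hbp)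
    (sbtw_iff_not_btw.2 hp)).btw

theorem cIoo_inter_cIoo_subset : cIoo a m ∩ cIoo m b ⊆ cIoo a b :=
  fun _ h => sbtw_drop_left (sbtw_cyclic_right h.1) h.2

theorem compl_singleton_subset_cIoo_union (h : sbtw a b m) : {m}ᶜ ⊆ cIoo a m ∪ cIoo m b := by
  intro p (hpm : p ≠ m)
  by_cases hp : sbtw a p m
  · exact Or.inl hp
  right
  rcases eq_or_ne p a with rfl | hpa
  · exact h.cyclic_right
  exact sbtw_trans_right ((btw_iff_not_sbtw.2 hp).sbtw_of_ne hpm.symm hpa h.left_ne_right.symm)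
    h.cyclic_right

theorem cIcc_subset_cIoo (h₁ : sbtw a b c) (h₂ : sbtw a c d) : cIcc b c ⊆ cIoo a d := by
  intro p (hp : btw b p c)
  rcases eq_or_ne p b with rfl | hpb
  · exact sbtw_trans_right h₁ h₂
  rcases eq_or_ne p c with rfl | hpc
  · exact h₂
  exact sbtw_trans_right (h₁.trans_left (hp.sbtw_of_ne hpb.symm hpc h₁.ne_right)) h₂

variable [TopologicalSpace X]

theorem cIoo_nonempty_of_isOpen (hopen : ∀ a b : X, IsOpen (cIoo a b))
    (hconn : ∀ m : X, IsPreconnected ({m}ᶜ : Set X)) (hab : a ≠ b) (hma : m ≠ a) (hmb : m ≠ b) :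
    (cIoo a b).Nonempty := by
  by_cases h : sbtw a m b
  · exact ⟨m, h⟩
  have habm : sbtw a b m :=
    sbtw_cyclic_right ((btw_iff_not_sbtw.2 h).sbtw_of_ne hmb.symm hma hab.symm)
  obtain ⟨p, -, hp⟩ := hconn m _ _ (hopen a m) (hopen m b) (compl_singleton_subset_cIoo_union habm)
    ⟨b, hmb.symm, habm⟩ ⟨a, hma.symm, habm.cyclic_right⟩
  exact ⟨p, cIoo_inter_cIoo_subset hp⟩

theorem isPreconnected_cIcc (hclosed : ∀ a b : X, IsClosed (cIcc a b))
    (hconn : IsPreconnected ({m}ᶜ : Set X)) (hm : sbtw b m a) : IsPreconnected (cIcc a b) := by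
  rw [isPreconnected_closed_iff]
  intro t t' ht ht' hcov hst hst'
  wlog hat : a ∈ t generalizing t t'
  · have hat' : a ∈ t' := (hcov (left_mem_cIcc a b)).resolve_left hat
    simpa only [inter_comm t] using this t' t ht' ht (by rwa [union_comm]) hst' hst hat'
  by_contra hdisj
  -- glue the ends `[b, m]`, `[m, a]` of the complementary arc to the pieces they touch
  let T := (cIcc a b ∩ t) ∪ cIcc m a ∪ {p | btw b p m ∧ b ∈ t}
  let T' := (cIcc a b ∩ t') ∪ {p | btw b p m ∧ b ∈ t'}
  have hT : IsClosed T :=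
    ((hclosed a b).inter ht).union (hclosed m a) |>.union ((hclosed b m).inter isClosed_const)
  have hT' : IsClosed T' := ((hclosed a b).inter ht').union ((hclosed b m).inter isClosed_const)
  have hcovT : {m}ᶜ ⊆ T ∪ T' := by
    intro p _
    by_cases hp : btw a p b
    · exact (hcov hp).imp (fun h => Or.inl (Or.inl ⟨hp, h⟩)) (fun h => Or.inl ⟨hp, h⟩)
    rcases btw_or_btw_of_not_btw hm hp with hbpm | hmpa
    · exact (hcov (right_mem_cIcc a b)).imp (fun h => Or.inr ⟨hbpm, h⟩)
        (fun h => Or.inr ⟨hbpm, h⟩)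
    · exact Or.inl (Or.inl (Or.inr hmpa))
  have hms : ∀ {p}, p ∈ cIcc a b → p ∈ ({m}ᶜ : Set X) := fun hp hpm =>
    hm.not_btw (hpm ▸ hp)
  obtain ⟨q, hqs, hqt'⟩ := hst'
  obtain ⟨r, hrm, hrT, hrT'⟩ := isPreconnected_closed_iff.1 hconn T T' hT hT' hcovT
    ⟨a, hms (left_mem_cIcc a b), Or.inl (Or.inl ⟨left_mem_cIcc a b, hat⟩)⟩
    ⟨q, hms hqs, Or.inl ⟨hqs, hqt'⟩⟩
  have hb : b ∈ t → b ∈ t' → False := fun h h' => hdisj ⟨b, right_mem_cIcc a b, h, h'⟩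
  rcases hrT with (⟨hrs, hrt⟩ | hrma) | ⟨hrbm, hbt⟩ <;>
    rcases hrT' with ⟨hrs', hrt'⟩ | ⟨hrbm', hbt'⟩
  · exact hdisj ⟨r, hrs, hrt, hrt'⟩
  · obtain rfl := eq_of_btw_of_btw_of_sbtw hm.cyclic_right hrs hrbm'
    exact hb hrt hbt'
  · obtain rfl := eq_of_btw_of_btw_of_sbtw hm.cyclic_left hrma hrs'
    exact hdisj ⟨r, hrs', hat, hrt'⟩
  · exact hrm (eq_of_btw_of_btw_of_sbtw hm hrbm' hrma)
  · obtain rfl := eq_of_btw_of_btw_of_sbtw hm.cyclic_right hrs' hrbm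
    exact hb hbt hrt'
  · exact hb hbt hbt'

end CircularOrder

theorem IsCompact.continuousOn_of_unique {α β γ : Type*} [TopologicalSpace α]
    [TopologicalSpace β] [TopologicalSpace γ] [T1Space γ] {A : Set α} {B : Set β}
    (hB : IsCompact B) {g : α → β → γ} {c : γ} {f : α → β}
    (hg : ∀ x ∈ A, ∀ y ∈ B, ContinuousAt (Function.uncurry g) (x, y))
    (hf : ∀ x ∈ A, f x ∈ B ∧ g x (f x) = c) (huniq : ∀ x ∈ A, ∀ y, y ∈ B ∧ g x y = c → y = f x) :
    ContinuousOn f A := by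
  intro x₀ hx₀
  refine tendsto_nhds.2 fun V hV hfV => ?_
  have hev : ∀ᶠ x in 𝓝 x₀, ∀ y ∈ B ∩ Vᶜ, g x y ≠ c :=
    (hB.inter_right hV.isClosed_compl).eventually_forall_of_forall_eventually fun y hy =>
      (hg x₀ hx₀ y hy.1).eventually_ne fun h => hy.2 (huniq x₀ hx₀ y ⟨hy.1, h⟩ ▸ hfV)
  filter_upwards [mem_nhdsWithin_of_mem_nhds hev, self_mem_nhdsWithin] with x hx hxA
  by_contra hfx
  exact hx (f x) ⟨(hf x hxA).1, hfx⟩ (hf x hxA).2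

namespace MonotoneMobius

variable {X : Type*} [CircularOrder X] [TopologicalSpace X] (M : MonotoneMobius X)
  {ω x y z u z' u' : X}

theorem infinite (M : MonotoneMobius X) : Infinite X :=
  have : Infinite (AddCircle (1 : ℝ)) :=
    (AddCircle.equivIco 1 0).infinite_iff.mpr (Ico_infinite (by norm_num)).to_subtype
  Infinite.of_injective _ M.circle.some.symm.injective

theorem t2Space (M : MonotoneMobius X) : T2Space X := M.circle.some.isEmbedding.t2Space

theorem compactSpace (M : MonotoneMobius X) : CompactSpace X := M.circle.some.symm.compactSpace

theorem isPreconnected_compl_singleton (M : MonotoneMobius X) (m : X) :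
    IsPreconnected ({m}ᶜ : Set X) := by
  let e := M.circle.some
  obtain ⟨a, ha⟩ := QuotientAddGroup.mk_surjective (e m)
  let f := AddCircle.openPartialHomeomorphCoe (1 : ℝ) a
  have h : IsPreconnected (f '' f.source) := isPreconnected_Ioo.image _ f.continuousOn
  rw [f.image_source_eq_target] at h
  change IsPreconnected {((a : ℝ) : AddCircle (1 : ℝ))}ᶜ at h
  rw [ha] at h
  convert e.isPreconnected_preimage.2 h
  ext
  simp [e.injective.eq_iff]

theorem isOpen_ball (hx : x ≠ ω) (r : ℝ) : IsOpen {y | y ≠ ω ∧ M.D ω x y < r} := by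
  have h : IsOpen[MTopology M.D] {y | y ≠ ω ∧ M.D ω x y < r} :=
    TopologicalSpace.GenerateOpen.basic _ ⟨ω, x, r, hx, rfl⟩
  rwa [M.mtop] at h

theorem dist_nonneg (hx : x ≠ ω) (hy : y ≠ ω) : 0 ≤ M.D ω x y := by
  rcases eq_or_ne x y with rfl | h
  · rw [M.refl]
  · exact (M.pos ω x y h hx hy).le

theorem exists_dist_mul_dist_swap_mul_eq (hx : x ≠ ω) : ∃ C, ∀ y s, y ≠ s →
    y ≠ ω → y ≠ x → s ≠ ω → s ≠ x →
      M.D ω x y * M.D x ω y * (M.D ω x s * M.D x ω s) = C := by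
  -- the inversions `|·|_ω → |·|_x` and `|·|_x → |·|_ω` compose to the homothety of ratio `c c'`
  obtain ⟨c, -, hc⟩ := M.inversion ω x hx.symm
  obtain ⟨c', -, hc'⟩ := M.inversion x ω hx
  refine ⟨c * c', fun y s hys hyω hyx hsω hsx => ?_⟩
  have h₁ := hc y s hyω hsω hyx hsx
  have h₂ := hc' y s hyx hsx hyω hsω
  have hA := M.pos ω y s hys hyω hsω
  have hB := M.pos x y s hys hyx hsx
  have := M.pos ω y x hyx hyω hx
  have := M.pos ω s x hsx hsω hx
  have := M.pos x y ω hyω hyx hx.symm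
  have := M.pos x s ω hsω hsx hx.symm
  rw [eq_div_iff (by positivity)] at h₁ h₂
  rw [M.symm ω x y, M.symm x ω y, M.symm ω x s, M.symm x ω s]
  refine mul_left_cancel₀ (mul_pos hA hB).ne' ?_
  linear_combination (M.D ω y s * (M.D x y ω * M.D x s ω)) * h₁ + (c * M.D ω y s) * h₂

theorem dist_mul_dist_swap_eq [Infinite X] (hx : x ≠ ω) {y y' : X} (hyω : y ≠ ω) (hyx : y ≠ x)
    (hy'ω : y' ≠ ω) (hy'x : y' ≠ x) :
    M.D ω x y * M.D x ω y = M.D ω x y' * M.D x ω y' := by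
  obtain ⟨C, hC⟩ := M.exists_dist_mul_dist_swap_mul_eq hx
  obtain ⟨s, hs⟩ := Infinite.exists_notMem_finset ({ω, x, y, y'} : Finset X)
  simp only [Finset.mem_insert, Finset.mem_singleton, not_or] at hs
  obtain ⟨hsω, hsx, hsy, hsy'⟩ := hs
  have hP : 0 < M.D ω x s * M.D x ω s :=
    mul_pos (M.pos ω x s (Ne.symm hsx) hx hsω) (M.pos x ω s (Ne.symm hsω) hx.symm hsx)
  refine mul_right_cancel₀ hP.ne' ?_
  rw [hC y s (Ne.symm hsy) hyω hyx hsω hsx, hC y' s (Ne.symm hsy') hy'ω hy'x hsω hsx]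

theorem eventually_lt_dist [Infinite X] [T1Space X] {y₀ : X} {r : ℝ} (hx : x ≠ ω)
    (hy₀ : y₀ ≠ ω) (hr : 0 < r) (hr' : r < M.D ω x y₀) : ∀ᶠ y in 𝓝 y₀, r < M.D ω x y := by
  have hy₀x : y₀ ≠ x := by rintro rfl; rw [M.refl] at hr'; linarith
  -- `|xy|_ω |ωy|_x` is constant, so a ball of `|·|_x` around `ω` bounds `|xy|_ω` below
  have hpos : 0 < M.D x ω y₀ := M.pos x ω y₀ hy₀.symm hx.symm hy₀x
  have hmem : y₀ ∈ {y | y ≠ x ∧ M.D x ω y < M.D ω x y₀ * M.D x ω y₀ / r} :=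
    ⟨hy₀x, by rw [lt_div_iff₀ hr]; nlinarith⟩
  filter_upwards [(M.isOpen_ball hx.symm _).mem_nhds hmem, isOpen_ne.mem_nhds hy₀]
    with y ⟨hyx, hyK⟩ hyω
  rw [lt_div_iff₀ hr, ← M.dist_mul_dist_swap_eq hx hyω hyx hy₀ hy₀x] at hyK
  nlinarith [M.pos x ω y hyω.symm hx.symm hyx]

theorem continuousAt_dist [Infinite X] [T1Space X] {y₀ : X} (hx : x ≠ ω) (hy₀ : y₀ ≠ ω) :
    ContinuousAt (M.D ω x) y₀ := by
  refine tendsto_order.2 ⟨fun r hr => ?_, fun r hr => ?_⟩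
  · rcases lt_or_ge r 0 with hr₀ | hr₀
    · filter_upwards [isOpen_ne.mem_nhds hy₀] with y hy using hr₀.trans_le (M.dist_nonneg hx hy)
    · filter_upwards [M.eventually_lt_dist hx hy₀ (r := (r + M.D ω x y₀) / 2) (by linarith)
        (by linarith)] with y hy using by linarith
  · filter_upwards [(M.isOpen_ball hx r).mem_nhds ⟨hy₀, hr⟩] with y hy using hy.2

theorem isOpen_cIoo (M : MonotoneMobius X) (a b : X) : IsOpen (cIoo a b) := by
  have := M.infinite
  have := M.t2Space
  rcases eq_or_ne a b with rfl | hab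
  · convert isOpen_empty
    exact eq_empty_of_forall_notMem fun _ => sbtw_irrefl_left_right
  refine isOpen_iff_mem_nhds.2 fun t (ht : sbtw a t b) => ?_
  obtain ⟨ω, hω⟩ := Infinite.exists_notMem_finset ({a, b, t} : Finset X)
  simp only [Finset.mem_insert, Finset.mem_singleton, not_or] at hω
  obtain ⟨hωa, hωb, hωt⟩ := hω
  have hta : t ≠ a := ht.left_ne.symm
  have htb : t ≠ b := ht.ne_right
  -- near `t`, `|ba||tq| < |bt||aq|`, which (M) forbids once `(b, a)` separates `q` from `t`
  have hev : ∀ᶠ q in 𝓝 t, M.D ω b a * M.D ω t q < M.D ω b t * M.D ω a q :=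
    (continuousAt_const.mul (M.continuousAt_dist (Ne.symm hωt) (Ne.symm hωt))).eventually_lt
      (continuousAt_const.mul (M.continuousAt_dist (Ne.symm hωa) (Ne.symm hωt))) (by
        show M.D ω b a * M.D ω t t < M.D ω b t * M.D ω a t
        rw [M.refl, mul_zero]
        exact mul_pos (M.pos ω b t htb.symm (Ne.symm hωb) (Ne.symm hωt))
          (M.pos ω a t hta.symm (Ne.symm hωa) (Ne.symm hωt)))
  filter_upwards [hev, isOpen_ne.mem_nhds (Ne.symm hωt), isOpen_ne.mem_nhds hta,
    isOpen_ne.mem_nhds htb] with q hq hqω hqa hqb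
  refine sbtw_iff_not_btw.2 fun hbqa => ?_
  have hsep : PairSeparates b a q t := Or.inl ⟨hbqa.sbtw_of_ne (Ne.symm hqb) hqa hab.symm, ht⟩
  have := (M.mono ω b a q t (Ne.symm hωb) (Ne.symm hωa) hqω (Ne.symm hωt) hsep).2
  rw [M.symm ω q t] at this
  linarith

theorem isClosed_cIcc (M : MonotoneMobius X) (a b : X) : IsClosed (cIcc a b) := by
  rw [← isOpen_compl_iff, compl_cIcc]
  exact M.isOpen_cIoo b a

theorem cIoo_nonempty (M : MonotoneMobius X) {a b : X} (hab : a ≠ b) : (cIoo a b).Nonempty := by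
  have := M.infinite
  obtain ⟨m, hm⟩ := Infinite.exists_notMem_finset ({a, b} : Finset X)
  simp only [Finset.mem_insert, Finset.mem_singleton, not_or] at hm
  exact cIoo_nonempty_of_isOpen M.isOpen_cIoo M.isPreconnected_compl_singleton hab hm.1 hm.2

/-- In the semi-metric `|·|_ω`, the pair `((x, y), (z, u))` is harmonic iff this vanishes. -/
def harmonicDefect (ω x y z u : X) : ℝ := M.D ω z x * M.D ω u y - M.D ω u x * M.D ω z y

theorem harmonicDefect_swap : M.harmonicDefect ω y x z u = -M.harmonicDefect ω x y z u := by
  unfold harmonicDefect; ring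

theorem harmonicDefect_pos_at_left (hxz : x ≠ z) (hzu : z ≠ u) (hx : x ≠ ω) (hz : z ≠ ω)
    (hu : u ≠ ω) : 0 < M.harmonicDefect ω x z z u := by
  have := M.pos ω z x hxz.symm hz hx
  have := M.pos ω u z hzu.symm hu hz
  simp only [harmonicDefect, M.refl, mul_zero, sub_zero]
  positivity

theorem harmonicDefect_neg_at_right (hxu : x ≠ u) (hzu : z ≠ u) (hx : x ≠ ω) (hz : z ≠ ω)
    (hu : u ≠ ω) : M.harmonicDefect ω x u z u < 0 := by
  have := M.pos ω u x hxu.symm hu hx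
  have := M.pos ω z u hzu hz hu
  simp only [harmonicDefect, M.refl, mul_zero, zero_sub, neg_lt_zero]
  positivity

theorem continuousAt_harmonicDefect [Infinite X] [T1Space X] (hx : x ≠ ω) (hy : y ≠ ω)
    (hz : z ≠ ω) (hu : u ≠ ω) :
    ContinuousAt (fun p : X × X => M.harmonicDefect ω p.1 p.2 z u) (x, y) :=
  (((M.continuousAt_dist hz hx).comp continuousAt_fst).mul
    ((M.continuousAt_dist hu hy).comp continuousAt_snd)).sub
    (((M.continuousAt_dist hu hx).comp continuousAt_fst).mul
      ((M.continuousAt_dist hz hy).comp continuousAt_snd))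

theorem harmonic_of_harmonicDefect_eq_zero (hx : ω ≠ x) (hy : ω ≠ y) (hz : ω ≠ z) (hu : ω ≠ u)
    (h : M.harmonicDefect ω x y z u = 0) : M.Harmonic x y z u := by
  have h₀ : M.D ω x z * M.D ω y u = M.D ω x u * M.D ω y z := by
    rw [M.symm ω x z, M.symm ω y u, M.symm ω x u, M.symm ω y z]
    exact sub_eq_zero.1 h
  intro ω' h₁ h₂ h₃ h₄
  rcases eq_or_ne ω' ω with rfl | hne
  · exact h₀
  obtain ⟨c, -, hc⟩ := M.inversion ω ω' hne.symm
  have := M.pos ω x ω' h₁.symm hx.symm hne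
  have := M.pos ω y ω' h₂.symm hy.symm hne
  have := M.pos ω z ω' h₃.symm hz.symm hne
  have := M.pos ω u ω' h₄.symm hu.symm hne
  rw [hc x z hx.symm hz.symm h₁.symm h₃.symm, hc y u hy.symm hu.symm h₂.symm h₄.symm,
    hc x u hx.symm hu.symm h₁.symm h₄.symm, hc y z hy.symm hz.symm h₂.symm h₃.symm]
  field_simp
  linear_combination c ^ 2 * h₀

theorem Harmonic.swap (h : M.Harmonic x y z u) : M.Harmonic x y u z :=
  fun ω h₁ h₂ h₃ h₄ => (h ω h₁ h₂ h₄ h₃).symm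

theorem sbtw_of_harmonicDefect_eq_zero (hω : sbtw z ω u) (hx : sbtw z x u) (hxω : x ≠ ω)
    (hy : y ∈ cIcc u z) (h : M.harmonicDefect ω x y z u = 0) : sbtw u y z := by
  have hzu : z ≠ u := hx.left_ne_right
  refine hy.sbtw_of_ne ?_ ?_ hzu.symm <;> rintro rfl
  · exact (M.harmonicDefect_neg_at_right hx.ne_right hzu hxω hω.left_ne hω.ne_right.symm).ne h
  · exact (M.harmonicDefect_pos_at_left hx.left_ne.symm hzu hxω hω.left_ne hω.ne_right.symm).ne' h

theorem exists_harmonicDefect_eq_zero (hω : sbtw z ω u) (hx : sbtw z x u) (hxω : x ≠ ω) :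
    ∃ y ∈ cIcc u z, M.harmonicDefect ω x y z u = 0 := by
  have := M.infinite
  have := M.t2Space
  have hzu : z ≠ u := hx.left_ne_right
  have hzω : z ≠ ω := hω.left_ne
  have huω : u ≠ ω := hω.ne_right.symm
  have hneg := M.harmonicDefect_neg_at_right hx.ne_right hzu hxω hzω huω
  have hpos := M.harmonicDefect_pos_at_left hx.left_ne.symm hzu hxω hzω huω
  have hcont : ContinuousOn (fun y => M.harmonicDefect ω x y z u) (cIcc u z) := fun y hy =>
    ((M.continuousAt_harmonicDefect hxω (fun hyω => hω.not_btw (hyω ▸ hy)) hzω huω).comp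
      (continuousAt_const.prodMk continuousAt_id)).continuousWithinAt
  exact (isPreconnected_cIcc M.isClosed_cIcc (M.isPreconnected_compl_singleton ω) hω
    ).intermediate_value (left_mem_cIcc u z) (right_mem_cIcc u z) hcont ⟨hneg.le, hpos.le⟩

theorem eq_of_harmonicDefect_eq_zero (hω : sbtw z ω u) (hx : sbtw z x u) (hxω : x ≠ ω)
    {y₁ y₂ : X} (hy₁ : y₁ ∈ cIcc u z) (h₁ : M.harmonicDefect ω x y₁ z u = 0)
    (hy₂ : y₂ ∈ cIcc u z) (h₂ : M.harmonicDefect ω x y₂ z u = 0) : y₁ = y₂ := by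
  wlog h : btw u y₁ y₂ generalizing y₁ y₂
  · exact (this hy₂ h₂ hy₁ h₁ ((btw_total u y₁ y₂).resolve_left h).cyclic_left.cyclic_left).symm
  by_contra hne
  have hs₁ := M.sbtw_of_harmonicDefect_eq_zero hω hx hxω hy₁ h₁
  have hs₂ := M.sbtw_of_harmonicDefect_eq_zero hω hx hxω hy₂ h₂
  have hsep : PairSeparates u y₂ y₁ z :=
    Or.inl ⟨h.sbtw_of_ne hs₁.left_ne hne hs₂.left_ne, hs₂.cyclic_left⟩
  have hmono := (M.mono ω u y₂ y₁ z hω.ne_right.symm (fun h => hω.not_btw (h ▸ hy₂))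
    (fun h => hω.not_btw (h ▸ hy₁)) hω.left_ne hsep).1
  have key : M.D ω z x * (M.D ω u y₁ * M.D ω z y₂ - M.D ω u y₂ * M.D ω z y₁) = 0 := by
    unfold harmonicDefect at h₁ h₂
    linear_combination M.D ω z y₂ * h₁ - M.D ω z y₁ * h₂
  rcases mul_eq_zero.1 key with h | h
  · exact (M.pos ω z x hx.left_ne hω.left_ne hxω).ne' h
  rw [M.symm ω y₂ z, M.symm ω y₁ z] at hmono
  linarith

def IsCommonPerpendicular (x y z u z' u' : X) : Prop :=
  x ≠ y ∧ x ≠ z ∧ x ≠ u ∧ x ≠ z' ∧ x ≠ u' ∧ y ≠ z ∧ y ≠ u ∧ y ≠ z' ∧ y ≠ u' ∧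
    M.Harmonic x y z u ∧ M.Harmonic x y z' u'

namespace IsCommonPerpendicular

variable {M} {x y : X}

theorem swap_left (h : M.IsCommonPerpendicular x y u z z' u') :
    M.IsCommonPerpendicular x y z u z' u' :=
  let ⟨hxy, hxu, hxz, hxz', hxu', hyu, hyz, hyz', hyu', h₁, h₂⟩ := h
  ⟨hxy, hxz, hxu, hxz', hxu', hyz, hyu, hyz', hyu', h₁.swap, h₂⟩

theorem swap_right (h : M.IsCommonPerpendicular x y z u u' z') :
    M.IsCommonPerpendicular x y z u z' u' :=
  let ⟨hxy, hxz, hxu, hxu', hxz', hyz, hyu, hyu', hyz', h₁, h₂⟩ := h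
  ⟨hxy, hxz, hxu, hxz', hxu', hyz, hyu, hyz', hyu', h₁, h₂.swap⟩

theorem symm (h : M.IsCommonPerpendicular x y z' u' z u) :
    M.IsCommonPerpendicular x y z u z' u' :=
  let ⟨hxy, hxz', hxu', hxz, hxu, hyz', hyu', hyz, hyu, h₁, h₂⟩ := h
  ⟨hxy, hxz, hxu, hxz', hxu', hyz, hyu, hyz', hyu', h₂, h₁⟩

end IsCommonPerpendicular

theorem exists_continuousOn_reflection (hω : sbtw z ω u) {A : Set X} (hA : A ⊆ cIoo z u)
    (hAω : ∀ x ∈ A, x ≠ ω) : ∃ ρ : X → X, ContinuousOn ρ A ∧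
      ∀ x ∈ A, ρ x ∈ cIoo u z ∧ M.harmonicDefect ω x (ρ x) z u = 0 := by
  have := M.infinite
  have := M.t2Space
  have := M.compactSpace
  have hBω : ∀ y ∈ cIcc u z, y ≠ ω := fun y hy hyω => hω.not_btw (hyω ▸ hy)
  choose! ρ hρB hρ using fun x (hx : x ∈ A) =>
    M.exists_harmonicDefect_eq_zero hω (hA hx) (hAω x hx)
  have huniq : ∀ x ∈ A, ∀ y, y ∈ cIcc u z ∧ M.harmonicDefect ω x y z u = 0 → y = ρ x :=
    fun x hx y hy => M.eq_of_harmonicDefect_eq_zero hω (hA hx) (hAω x hx) hy.1 hy.2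
      (hρB x hx) (hρ x hx)
  refine ⟨ρ, (M.isClosed_cIcc u z).isCompact.continuousOn_of_unique
    (g := fun x y => M.harmonicDefect ω x y z u) (fun x hx y hy => ?_)
    (fun x hx => ⟨hρB x hx, hρ x hx⟩) huniq,
    fun x hx => ⟨M.sbtw_of_harmonicDefect_eq_zero hω (hA hx) (hAω x hx) (hρB x hx) (hρ x hx),
      hρ x hx⟩⟩
  exact M.continuousAt_harmonicDefect (hAω x hx) (hBω y hy) hω.left_ne hω.ne_right.symm

theorem exists_harmonicDefect_map_eq_zero (hω : sbtw u' ω z') {ρ : X → X}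
    (hρc : ContinuousOn ρ (cIcc z' u')) (hρ : ∀ x ∈ cIcc z' u', ρ x ∉ cIcc z' u' ∧ ρ x ≠ ω) :
    ∃ x ∈ cIoo z' u', M.harmonicDefect ω x (ρ x) z' u' = 0 := by
  have := M.infinite
  have := M.t2Space
  have hAω : ∀ x ∈ cIcc z' u', x ≠ ω := fun x hx hxω => hω.not_btw (hxω ▸ hx)
  have hz' : z' ∈ cIcc z' u' := left_mem_cIcc z' u'
  have hu' : u' ∈ cIcc z' u' := right_mem_cIcc z' u'
  have hz'u' : z' ≠ u' := hω.left_ne_right.symm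
  let H x := M.harmonicDefect ω x (ρ x) z' u'
  have hHc : ContinuousOn H (cIcc z' u') := fun x hx =>
    (M.continuousAt_harmonicDefect (hAω x hx) (hρ x hx).2 (hAω z' hz')
      (hAω u' hu')).comp_continuousWithinAt (f := fun x => (x, ρ x))
      (continuousWithinAt_id.prodMk (hρc x hx))
  have hHz' : H z' < 0 := by
    show M.harmonicDefect ω z' (ρ z') z' u' < 0
    rw [harmonicDefect_swap, neg_neg_iff_pos]
    exact M.harmonicDefect_pos_at_left (fun h => (hρ z' hz').1 (by rwa [h])) hz'u'
      (hρ z' hz').2 (hAω z' hz') (hAω u' hu')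
  have hHu' : 0 < H u' := by
    show 0 < M.harmonicDefect ω u' (ρ u') z' u'
    rw [harmonicDefect_swap, neg_pos]
    exact M.harmonicDefect_neg_at_right (fun h => (hρ u' hu').1 (by rwa [h])) hz'u'
      (hρ u' hu').2 (hAω z' hz') (hAω u' hu')
  obtain ⟨x, hx, hHx⟩ := (isPreconnected_cIcc M.isClosed_cIcc
    (M.isPreconnected_compl_singleton ω) hω).intermediate_value hz' hu' hHc ⟨hHz'.le, hHu'.le⟩
  refine ⟨x, hx.sbtw_of_ne ?_ ?_ hz'u', hHx⟩ <;> rintro rfl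
  exacts [hHz'.ne hHx, hHu'.ne' hHx]

theorem exists_isCommonPerpendicular_of_sbtw (hω : sbtw z ω z') (h₁ : sbtw z z' u')
    (h₂ : sbtw z u' u) : ∃ x y, M.IsCommonPerpendicular x y z u z' u' := by
  have hAB : cIcc z' u' ⊆ cIoo z u := cIcc_subset_cIoo h₁ h₂
  have hωB : sbtw z ω u := sbtw_trans_right hω (sbtw_trans_right h₁ h₂)
  have hωA : sbtw u' ω z' := sbtw_cyclic_right (sbtw_drop_left hω h₁)
  have hAω : ∀ x ∈ cIcc z' u', x ≠ ω := fun x hx hxω => hωA.not_btw (hxω ▸ hx)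
  have hBω : ∀ y ∈ cIoo u z, y ≠ ω := fun y hy hyω => hωB.not_btw (hyω ▸ hy.btw)
  have hBA : ∀ y ∈ cIoo u z, y ∉ cIcc z' u' := fun y hy hyA => (hAB hyA).not_btw hy.btw
  obtain ⟨ρ, hρc, hρ⟩ := M.exists_continuousOn_reflection hωB hAB hAω
  obtain ⟨x, hx, hx₀'⟩ := M.exists_harmonicDefect_map_eq_zero hωA hρc fun x hx =>
    ⟨hBA _ (hρ x hx).1, hBω _ (hρ x hx).1⟩
  have hxA : x ∈ cIcc z' u' := hx.btw
  obtain ⟨hρx, hx₀⟩ := hρ x hxA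
  have hxB := hAB hxA
  refine ⟨x, ρ x, fun h => hBA _ hρx (h ▸ hxA), hxB.left_ne.symm, hxB.ne_right, hx.left_ne.symm,
    hx.ne_right, hρx.ne_right, hρx.left_ne.symm, fun h => hBA _ hρx (h ▸ left_mem_cIcc z' u'),
    fun h => hBA _ hρx (h ▸ right_mem_cIcc z' u'), ?_, ?_⟩
  · exact M.harmonic_of_harmonicDefect_eq_zero (hAω x hxA).symm (hBω _ hρx).symm
      hωB.left_ne.symm hωB.ne_right hx₀
  · exact M.harmonic_of_harmonicDefect_eq_zero (hAω x hxA).symm (hBω _ hρx).symm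
      hωA.ne_right hωA.left_ne.symm hx₀'

theorem exists_isCommonPerpendicular_of_mem_cIoo (hz' : sbtw z z' u) (hu' : sbtw z u' u)
    (hne : z' ≠ u') : ∃ x y, M.IsCommonPerpendicular x y z u z' u' := by
  wlog h : btw z z' u' generalizing z' u'
  · obtain ⟨x, y, hxy⟩ := this hu' hz' hne.symm
      ((btw_total z z' u').resolve_left h).cyclic_left.cyclic_left
    exact ⟨x, y, hxy.swap_right⟩
  obtain ⟨ω, hω⟩ := M.cIoo_nonempty hz'.left_ne
  exact M.exists_isCommonPerpendicular_of_sbtw hω (h.sbtw_of_ne hz'.left_ne hne hu'.left_ne) hu'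

end MonotoneMobius

/-- Let `M` be a monotone Möbius structure on the circle and let
`b = (z,u)`, `b' = (z',u')` be two pairs of distinct points of the circle in the strong
causal relation. Then there exists a common perpendicular: a pair `a = (x,y)` such that both
`(a,b)` and `(a,b')` are harmonic. -/
theorem stmt10 {X : Type*} [CircularOrder X] [TopologicalSpace X]
    (M : MonotoneMobius X) (z u z' u' : X)
    (hzu : z ≠ u) (hzu' : z' ≠ u')
    (hsc : StrongCausal z u z' u') :
    ∃ x y : X, x ≠ y ∧
      x ≠ z ∧ x ≠ u ∧ x ≠ z' ∧ x ≠ u' ∧ y ≠ z ∧ y ≠ u ∧ y ≠ z' ∧ y ≠ u' ∧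
      M.Harmonic x y z u ∧ M.Harmonic x y z' u' := by
  suffices ∃ x y, M.IsCommonPerpendicular x y z u z' u' from this
  rcases hsc with ⟨h₁, h₂⟩ | ⟨h₁, h₂⟩ | ⟨h₁, h₂⟩ | ⟨h₁, h₂⟩
  · exact M.exists_isCommonPerpendicular_of_mem_cIoo h₁ h₂ hzu'
  · obtain ⟨x, y, h⟩ := M.exists_isCommonPerpendicular_of_mem_cIoo h₁ h₂ hzu'
    exact ⟨x, y, h.swap_left⟩
  · obtain ⟨x, y, h⟩ := M.exists_isCommonPerpendicular_of_mem_cIoo h₁ h₂ hzu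
    exact ⟨x, y, h.symm⟩
  · obtain ⟨x, y, h⟩ := M.exists_isCommonPerpendicular_of_mem_cIoo h₁ h₂ hzu
    exact ⟨x, y, h.symm.swap_right⟩
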